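/- arXiv:1505.05720 — 6 statements merged into one kernel-verified Lean document; each statement's English description precedes it below -/
import Mathlib

section
/- Degenerate Poincaré inequality (Fubini version): if a satisfies the degeneracy assumptions with μ < 2 and u is locally absolutely continuous on (0,1] with u(1) = 0 and ∫₀¹ a(x)|u'(x)|² dx < ∞, then ∫₀¹ |u(x)|² dx ≤ (1/(a(1)(2-μ))) · ∫₀¹ a(x)|u'(x)|² dx. -/
open MeasureTheory Set
open scoped ENNReal

/-! Since `x a'(x) ≤ μ a(x)`, the function `a(x) x^(-μ)` is nonincreasing, so `a(x) ≥ a(1) x^μ`.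
Writing `u(x) = -∫_x^1 u'` and applying Cauchy–Schwarz with weight `a` gives
`u(x)² ≤ (∫_x^1 1/a) (∫_x^1 a u'²) ≤ a(1)⁻¹ (∫_x^1 t^(-μ) dt) ∫_0^1 a u'²`.
Integrating in `x` and exchanging the order of integration,
`∫_0^1 ∫_x^1 t^(-μ) dt dx = ∫_0^1 t^(1-μ) dt = 1/(2-μ)`, which is finite because `μ < 2`. -/

lemma antitoneOn_mul_rpow_neg {a ad : ℝ → ℝ} {μ : ℝ} {s : Set ℝ} (hs : Convex ℝ s)
    (hs0 : s ⊆ Ioi 0) (hderiv : ∀ x ∈ s, HasDerivAt a (ad x) x)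
    (hμ : ∀ x ∈ s, x * ad x ≤ μ * a x) :
    AntitoneOn (fun x => a x * x ^ (-μ)) s := by
  have hder : ∀ x ∈ s, HasDerivAt (fun x => a x * x ^ (-μ))
      (ad x * x ^ (-μ) + a x * (-μ * x ^ (-μ - 1))) x := fun x hx =>
    (hderiv x hx).mul (Real.hasDerivAt_rpow_const (Or.inl (hs0 hx).ne'))
  refine antitoneOn_of_deriv_nonpos hs
    (fun x hx => (hder x hx).continuousAt.continuousWithinAt)
    (fun x hx => (hder x (interior_subset hx)).differentiableAt.differentiableWithinAt)
    fun x hx => ?_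
  have hxs := interior_subset hx
  have hx0 : 0 < x := hs0 hxs
  rw [(hder x hxs).deriv]
  calc ad x * x ^ (-μ) + a x * (-μ * x ^ (-μ - 1))
      = (x * ad x - μ * a x) * x ^ (-μ - 1) := by
        rw [Real.rpow_sub_one hx0.ne']; field_simp; ring
    _ ≤ 0 := mul_nonpos_of_nonpos_of_nonneg (by linarith [hμ x hxs]) (by positivity)

lemma mul_rpow_le_of_mul_deriv_le {a ad : ℝ → ℝ} {μ : ℝ}
    (hderiv : ∀ x ∈ Ioc (0 : ℝ) 1, HasDerivAt a (ad x) x)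
    (hμ : ∀ x ∈ Ioc (0 : ℝ) 1, x * ad x ≤ μ * a x) {x : ℝ} (hx : x ∈ Ioc (0 : ℝ) 1) :
    a 1 * x ^ μ ≤ a x := by
  have hx0 := hx.1
  have h := antitoneOn_mul_rpow_neg (convex_Ioc 0 1) Ioc_subset_Ioi_self hderiv hμ hx
    (right_mem_Ioc.2 one_pos) hx.2
  simp only [Real.one_rpow, mul_one] at h
  calc a 1 * x ^ μ ≤ a x * x ^ (-μ) * x ^ μ := by gcongr
    _ = a x := by rw [mul_assoc, ← Real.rpow_add hx0]; simp

lemma abs_eq_sqrt_inv_mul_sqrt_mul_sq {w f : ℝ} (hw : 0 < w) :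
    |f| = √w⁻¹ * √(w * f ^ 2) := by
  rw [← Real.sqrt_mul (inv_nonneg.2 hw.le), inv_mul_cancel_left₀ hw.ne', Real.sqrt_sq_eq_abs]

section WeightedCauchySchwarz

variable {α : Type*} [MeasurableSpace α] {ν : Measure α}

lemma memLp_two_sqrt {g : α → ℝ} (hg : Integrable g ν) (hg0 : 0 ≤ᵐ[ν] g) :
    MemLp (fun x => √(g x)) 2 ν := by
  refine (memLp_two_iff_integrable_sq (Real.continuous_sqrt.comp_aestronglyMeasurable hg.1)).2 (hg.congr ?_)
  filter_upwards [hg0] with x hx using (Real.sq_sqrt hx).symm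

lemma integral_sqrt_mul_sqrt_le {g h : α → ℝ} (hg : Integrable g ν) (hh : Integrable h ν)
    (hg0 : 0 ≤ᵐ[ν] g) (hh0 : 0 ≤ᵐ[ν] h) :
    ∫ x, √(g x) * √(h x) ∂ν ≤ √(∫ x, g x ∂ν) * √(∫ x, h x ∂ν) := by
  have hsq : ∀ {k : α → ℝ}, 0 ≤ᵐ[ν] k → ∫ x, √(k x) ^ (2 : ℝ) ∂ν = ∫ x, k x ∂ν := fun hk0 =>
    integral_congr_ae <| by
      filter_upwards [hk0] with x hx using by rw [Real.rpow_two, Real.sq_sqrt hx]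
  have := integral_mul_le_Lp_mul_Lq_of_nonneg Real.HolderConjugate.two_two
    (ae_of_all _ fun x => Real.sqrt_nonneg (g x)) (ae_of_all _ fun x => Real.sqrt_nonneg (h x))
    (by simpa using memLp_two_sqrt hg hg0) (by simpa using memLp_two_sqrt hh hh0)
  rwa [hsq hg0, hsq hh0, ← Real.sqrt_eq_rpow, ← Real.sqrt_eq_rpow] at this

variable {w f : α → ℝ}

lemma integrable_of_integrable_inv_of_integrable_mul_sq (hfm : AEStronglyMeasurable f ν)
    (hw : ∀ᵐ x ∂ν, 0 < w x) (hinv : Integrable (fun x => (w x)⁻¹) ν)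
    (hwf : Integrable (fun x => w x * f x ^ 2) ν) : Integrable f ν := by
  have hw0 : ∀ᵐ x ∂ν, 0 ≤ w x := hw.mono fun x hx => hx.le
  refine (integrable_norm_iff hfm).1 <| ((memLp_two_sqrt hinv ?_).integrable_mul
    (memLp_two_sqrt hwf ?_)).congr ?_
  · filter_upwards [hw0] with x hx using inv_nonneg.2 hx
  · filter_upwards [hw0] with x hx using mul_nonneg hx (sq_nonneg _)
  · filter_upwards [hw] with x hx using (abs_eq_sqrt_inv_mul_sqrt_mul_sq hx).symm

lemma sq_integral_le_integral_inv_mul_integral_mul_sq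
    (hw : ∀ᵐ x ∂ν, 0 < w x) (hinv : Integrable (fun x => (w x)⁻¹) ν)
    (hwf : Integrable (fun x => w x * f x ^ 2) ν) :
    (∫ x, f x ∂ν) ^ 2 ≤ (∫ x, (w x)⁻¹ ∂ν) * ∫ x, w x * f x ^ 2 ∂ν := by
  have hinv0 : 0 ≤ᵐ[ν] fun x => (w x)⁻¹ := hw.mono fun x hx => inv_nonneg.2 hx.le
  have hwf0 : 0 ≤ᵐ[ν] fun x => w x * f x ^ 2 :=
    hw.mono fun x hx => mul_nonneg hx.le (sq_nonneg _)
  have habs : ∫ x, |f x| ∂ν = ∫ x, √(w x)⁻¹ * √(w x * f x ^ 2) ∂ν :=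
    integral_congr_ae <| hw.mono fun x hx => abs_eq_sqrt_inv_mul_sqrt_mul_sq hx
  calc (∫ x, f x ∂ν) ^ 2 ≤ (∫ x, |f x| ∂ν) ^ 2 := by
        rw [← sq_abs]
        exact pow_le_pow_left₀ (abs_nonneg _) (abs_integral_le_integral_abs) 2
    _ ≤ (√(∫ x, (w x)⁻¹ ∂ν) * √(∫ x, w x * f x ^ 2 ∂ν)) ^ 2 := by
        rw [habs]
        exact pow_le_pow_left₀ (integral_nonneg fun x => by positivity)
          (integral_sqrt_mul_sqrt_le hinv hwf hinv0 hwf0) 2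
    _ = _ := by
        rw [mul_pow, Real.sq_sqrt (integral_nonneg_of_ae hinv0),
          Real.sq_sqrt (integral_nonneg_of_ae hwf0)]

end WeightedCauchySchwarz

lemma sq_sub_le_integral_inv_mul_integral_mul_sq {u ud w : ℝ → ℝ} {x y : ℝ} (hxy : x ≤ y)
    (hu : ∀ t ∈ Icc x y, HasDerivAt u (ud t) t) (hw : ContinuousOn w (Icc x y))
    (hw0 : ∀ t ∈ Icc x y, 0 < w t) (hwud : IntegrableOn (fun t => w t * ud t ^ 2) (Ioo x y)) :
    (u y - u x) ^ 2 ≤ (∫ t in Ioo x y, (w t)⁻¹) * ∫ t in Ioo x y, w t * ud t ^ 2 := by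
  have hw0' : ∀ᵐ t ∂volume.restrict (Ioo x y), 0 < w t :=
    ae_restrict_of_forall_mem measurableSet_Ioo fun t ht => hw0 t (Ioo_subset_Icc_self ht)
  have hinv : IntegrableOn (fun t => (w t)⁻¹) (Ioo x y) :=
    ((hw.inv₀ fun t ht => (hw0 t ht).ne').integrableOn_Icc).mono_set Ioo_subset_Icc_self
  have hudm : AEStronglyMeasurable ud (volume.restrict (Ioo x y)) :=
    (measurable_deriv u).aestronglyMeasurable.congr <| ae_restrict_of_forall_mem measurableSet_Ioo
      fun t ht => (hu t (Ioo_subset_Icc_self ht)).deriv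
  have hud : IntegrableOn ud (Ioo x y) :=
    integrable_of_integrable_inv_of_integrable_mul_sq hudm hw0' hinv hwud
  have hftc : ∫ t in Ioo x y, ud t = u y - u x := by
    rw [← integral_Ioc_eq_integral_Ioo, ← intervalIntegral.integral_of_le hxy]
    exact intervalIntegral.integral_eq_sub_of_hasDerivAt (fun t ht => hu t (uIcc_of_le hxy ▸ ht))
      ((intervalIntegrable_iff_integrableOn_Ioo_of_le hxy).2 hud)
  rw [← hftc]
  exact sq_integral_le_integral_inv_mul_integral_mul_sq hw0' hinv hwud

lemma lintegral_Ioo_lintegral_Ioo {g : ℝ → ℝ≥0∞} (hg : Measurable g) (a b : ℝ) :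
    ∫⁻ x in Ioo a b, ∫⁻ t in Ioo x b, g t = ∫⁻ t in Ioo a b, ENNReal.ofReal (t - a) * g t := by
  have hF : Measurable (Function.uncurry fun x t : ℝ => (Ioi x).indicator g t) := by
    have : Function.uncurry (fun x t : ℝ => (Ioi x).indicator g t) =
        {p : ℝ × ℝ | p.1 < p.2}.indicator (fun p => g p.2) := by
      ext ⟨x, t⟩; simp [indicator]
    rw [this]
    exact (hg.comp measurable_snd).indicator (measurableSet_lt measurable_fst measurable_snd)
  calc ∫⁻ x in Ioo a b, ∫⁻ t in Ioo x b, g t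
      = ∫⁻ x in Ioo a b, ∫⁻ t in Ioo a b, (Ioi x).indicator g t := by
        refine setLIntegral_congr_fun measurableSet_Ioo fun x hx => ?_
        rw [lintegral_indicator measurableSet_Ioi, Measure.restrict_restrict measurableSet_Ioi]
        congr 2
        ext t; simp only [mem_Ioo, mem_inter_iff, mem_Ioi]; grind
    _ = ∫⁻ t in Ioo a b, ∫⁻ x in Ioo a b, (Iio t).indicator (fun _ => g t) x := by
        rw [lintegral_lintegral_swap hF.aemeasurable]
        simp only [indicator, mem_Ioi, mem_Iio]
    _ = ∫⁻ t in Ioo a b, ENNReal.ofReal (t - a) * g t := by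
        refine setLIntegral_congr_fun measurableSet_Ioo fun t ht => ?_
        rw [lintegral_indicator_const measurableSet_Iio, Measure.restrict_apply measurableSet_Iio,
          Iio_inter_Ioo, min_eq_left ht.2.le, Real.volume_Ioo, mul_comm]

lemma integral_Ioo_integral_Ioo {g : ℝ → ℝ} {a b : ℝ} (hgm : Measurable g)
    (hg0 : ∀ t ∈ Ioo a b, 0 ≤ g t) (hg : ∀ x ∈ Ioo a b, IntegrableOn g (Ioo x b))
    (hga : IntegrableOn (fun t => (t - a) * g t) (Ioo a b)) :
    IntegrableOn (fun x => ∫ t in Ioo x b, g t) (Ioo a b) ∧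
      ∫ x in Ioo a b, ∫ t in Ioo x b, g t = ∫ t in Ioo a b, (t - a) * g t := by
  have hg0' : ∀ x ∈ Ioo a b, 0 ≤ᵐ[volume.restrict (Ioo x b)] g := fun x hx =>
    ae_restrict_of_forall_mem measurableSet_Ioo fun t ht => hg0 t ⟨hx.1.trans ht.1, ht.2⟩
  have hH0 : 0 ≤ᵐ[volume.restrict (Ioo a b)] fun x => ∫ t in Ioo x b, g t :=
    ae_restrict_of_forall_mem measurableSet_Ioo fun x hx => integral_nonneg_of_ae (hg0' x hx)
  have hga0 : 0 ≤ᵐ[volume.restrict (Ioo a b)] fun t => (t - a) * g t :=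
    ae_restrict_of_forall_mem measurableSet_Ioo fun t ht =>
      mul_nonneg (sub_nonneg.2 ht.1.le) (hg0 t ht)
  have hHm : AEStronglyMeasurable (fun x => ∫ t in Ioo x b, g t) (volume.restrict (Ioo a b)) :=
    (aemeasurable_restrict_of_antitoneOn measurableSet_Ioo fun x hx y _ hxy =>
      setIntegral_mono_set (hg x hx) (hg0' x hx)
        (Ioo_subset_Ioo_left hxy).eventuallyLE).aestronglyMeasurable
  have key : ∫⁻ x in Ioo a b, ENNReal.ofReal (∫ t in Ioo x b, g t) =
      ENNReal.ofReal (∫ t in Ioo a b, (t - a) * g t) := by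
    calc ∫⁻ x in Ioo a b, ENNReal.ofReal (∫ t in Ioo x b, g t)
        = ∫⁻ x in Ioo a b, ∫⁻ t in Ioo x b, ENNReal.ofReal (g t) :=
          setLIntegral_congr_fun measurableSet_Ioo fun x hx =>
            ofReal_integral_eq_lintegral_ofReal (hg x hx) (hg0' x hx)
      _ = ∫⁻ t in Ioo a b, ENNReal.ofReal ((t - a) * g t) :=
          (lintegral_Ioo_lintegral_Ioo (ENNReal.measurable_ofReal.comp hgm) a b).trans <|
            setLIntegral_congr_fun measurableSet_Ioo fun t ht =>
              (ENNReal.ofReal_mul (sub_nonneg.2 ht.1.le)).symm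
      _ = _ := (ofReal_integral_eq_lintegral_ofReal hga hga0).symm
  refine ⟨⟨hHm, ?_⟩, ?_⟩
  · rw [hasFiniteIntegral_iff_ofReal hH0, key]
    exact ENNReal.ofReal_lt_top
  · rw [integral_eq_lintegral_of_nonneg_ae hH0 hHm, key,
      ENNReal.toReal_ofReal (integral_nonneg_of_ae hga0)]

lemma integrableOn_Ioo_rpow_of_pos {x : ℝ} (hx : 0 < x) (y r : ℝ) :
    IntegrableOn (fun t => t ^ r) (Ioo x y) :=
  (continuousOn_id.rpow_const fun _ ht => Or.inl (hx.trans_le ht.1).ne').integrableOn_Icc.mono_set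
    Ioo_subset_Icc_self

lemma integral_Ioo_integral_Ioo_rpow_neg {μ : ℝ} (hμ : μ < 2) :
    IntegrableOn (fun x => ∫ t in Ioo x 1, t ^ (-μ)) (Ioo (0 : ℝ) 1) ∧
      ∫ x in Ioo (0 : ℝ) 1, ∫ t in Ioo x 1, t ^ (-μ) = 1 / (2 - μ) := by
  have hid : EqOn (fun t : ℝ => (t - 0) * t ^ (-μ)) (fun t => t ^ (1 - μ)) (Ioo 0 1) :=
    fun t ht => show (t - 0) * t ^ (-μ) = t ^ (1 - μ) by
      rw [sub_zero, sub_eq_neg_add, Real.rpow_add_one ht.1.ne', mul_comm]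
  have hint : IntegrableOn (fun t : ℝ => t ^ (1 - μ)) (Ioo 0 1) :=
    (intervalIntegral.integrableOn_Ioo_rpow_iff one_pos).2 (by linarith)
  obtain ⟨hHint, hH⟩ := integral_Ioo_integral_Ioo (by fun_prop)
    (fun t ht => Real.rpow_nonneg ht.1.le _)
    (fun x hx => integrableOn_Ioo_rpow_of_pos hx.1 1 (-μ))
    (hint.congr_fun hid.symm measurableSet_Ioo)
  refine ⟨hHint, ?_⟩
  rw [hH, setIntegral_congr_fun measurableSet_Ioo hid, ← integral_Ioc_eq_integral_Ioo,
    ← intervalIntegral.integral_of_le zero_le_one, integral_rpow (Or.inl (by linarith)),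
    Real.one_rpow, Real.zero_rpow (by linarith)]
  ring_nf

lemma sq_le_integral_rpow_neg_mul_integral {a u ud : ℝ → ℝ} {μ x : ℝ}
    (ha : ContinuousOn a (Ioc 0 1)) (hpos : ∀ t ∈ Ioc (0 : ℝ) 1, 0 < a t)
    (hgrowth : ∀ t ∈ Ioc (0 : ℝ) 1, a 1 * t ^ μ ≤ a t)
    (hu : ∀ t ∈ Ioc (0 : ℝ) 1, HasDerivAt u (ud t) t) (hu1 : u 1 = 0)
    (hud : IntegrableOn (fun t => a t * ud t ^ 2) (Ioo 0 1)) (hx : x ∈ Ioo 0 1) :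
    u x ^ 2 ≤ (a 1)⁻¹ * (∫ t in Ioo x 1, t ^ (-μ)) * ∫ t in Ioo 0 1, a t * ud t ^ 2 := by
  have hsub : Icc x 1 ⊆ Ioc 0 1 := Icc_subset_Ioc hx.1 le_rfl
  have hsub' : Ioo x 1 ⊆ Ioo 0 1 := Ioo_subset_Ioo_left hx.1.le
  have hinv0 : ∀ t ∈ Ioo x 1, 0 ≤ (a t)⁻¹ := fun t ht =>
    (inv_pos.2 (hpos t (hsub (Ioo_subset_Icc_self ht)))).le
  have haud0 : ∀ t ∈ Ioo 0 1, 0 ≤ a t * ud t ^ 2 := fun t ht =>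
    mul_nonneg (hpos t (Ioo_subset_Ioc_self ht)).le (sq_nonneg _)
  have hcs := sq_sub_le_integral_inv_mul_integral_mul_sq hx.2.le (fun t ht => hu t (hsub ht))
    (ha.mono hsub) (fun t ht => hpos t (hsub ht)) (hud.mono_set hsub')
  rw [hu1, zero_sub, neg_sq] at hcs
  have hinv : ∫ t in Ioo x 1, (a t)⁻¹ ≤ (a 1)⁻¹ * ∫ t in Ioo x 1, t ^ (-μ) := by
    rw [← integral_const_mul]
    refine integral_mono_of_nonneg (ae_restrict_of_forall_mem measurableSet_Ioo hinv0)
      ((integrableOn_Ioo_rpow_of_pos hx.1 1 (-μ)).const_mul _)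
      (ae_restrict_of_forall_mem measurableSet_Ioo fun t ht => ?_)
    have ht0 : 0 < t := hx.1.trans ht.1
    have ha1 : 0 < a 1 := hpos 1 ⟨one_pos, le_rfl⟩
    show (a t)⁻¹ ≤ (a 1)⁻¹ * t ^ (-μ)
    rw [Real.rpow_neg ht0.le, ← mul_inv]
    exact inv_anti₀ (by positivity) (hgrowth t ⟨ht0, ht.2.le⟩)
  have hud' : ∫ t in Ioo x 1, a t * ud t ^ 2 ≤ ∫ t in Ioo 0 1, a t * ud t ^ 2 :=
    setIntegral_mono_set hud (ae_restrict_of_forall_mem measurableSet_Ioo haud0)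
      hsub'.eventuallyLE
  exact hcs.trans <| mul_le_mul_of_nonneg hinv hud' (setIntegral_nonneg measurableSet_Ioo hinv0)
    (setIntegral_nonneg measurableSet_Ioo haud0)

theorem degenerate_poincare_fubini_general
    (a ad : ℝ → ℝ) (μ : ℝ)
    (hderiv : ∀ x ∈ Set.Ioc (0:ℝ) 1, HasDerivAt a (ad x) x)
    (hpos : ∀ x ∈ Set.Ioc (0:ℝ) 1, 0 < a x)
    (hμ2 : μ < 2)
    (hμ : ∀ x ∈ Set.Ioc (0:ℝ) 1, x * |ad x| ≤ μ * a x)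
    (u ud : ℝ → ℝ)
    (huderiv : ∀ x ∈ Set.Ioc (0:ℝ) 1, HasDerivAt u (ud x) x)
    (hu1 : u 1 = 0)
    (hud2 : MeasureTheory.IntegrableOn (fun x => a x * (ud x) ^ 2) (Set.Ioo 0 1)) :
    ∫ x in Set.Ioo (0:ℝ) 1, (u x) ^ 2
      ≤ (1 / (a 1 * (2 - μ))) * ∫ x in Set.Ioo (0:ℝ) 1, a x * (ud x) ^ 2 := by
  have hgrowth : ∀ x ∈ Ioc (0 : ℝ) 1, a 1 * x ^ μ ≤ a x :=
    fun x hx => mul_rpow_le_of_mul_deriv_le hderiv (fun t ht =>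
      (mul_le_mul_of_nonneg_left (le_abs_self _) ht.1.le).trans (hμ t ht)) hx
  have hpointwise := fun x (hx : x ∈ Ioo (0 : ℝ) 1) =>
    sq_le_integral_rpow_neg_mul_integral (fun t ht => (hderiv t ht).continuousAt.continuousWithinAt)
      hpos hgrowth huderiv hu1 hud2 hx
  obtain ⟨hHint, hH⟩ := integral_Ioo_integral_Ioo_rpow_neg hμ2
  calc ∫ x in Ioo (0 : ℝ) 1, u x ^ 2
      ≤ ∫ x in Ioo (0 : ℝ) 1,
          (a 1)⁻¹ * (∫ t in Ioo x 1, t ^ (-μ)) * ∫ t in Ioo 0 1, a t * ud t ^ 2 :=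
        integral_mono_of_nonneg (ae_of_all _ fun x => sq_nonneg _)
          ((hHint.const_mul _).mul_const _) (ae_restrict_of_forall_mem measurableSet_Ioo hpointwise)
    _ = _ := by rw [integral_mul_const, integral_const_mul, hH, one_div, one_div, mul_inv]

theorem degenerate_poincare_fubini
    (a ad : ℝ → ℝ) (μ : ℝ)
    (hcont : ContinuousOn a (Set.Icc 0 1))
    (hderiv : ∀ x ∈ Set.Ioc (0:ℝ) 1, HasDerivAt a (ad x) x)
    (hpos : ∀ x ∈ Set.Ioc (0:ℝ) 1, 0 < a x)
    (ha0 : a 0 = 0)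
    (hμ0 : 0 ≤ μ) (hμ2 : μ < 2)
    (hμ : ∀ x ∈ Set.Ioc (0:ℝ) 1, x * |ad x| ≤ μ * a x)
    (u ud : ℝ → ℝ)
    (hu2 : MeasureTheory.IntegrableOn (fun x => (u x) ^ 2) (Set.Ioo 0 1))
    (huderiv : ∀ x ∈ Set.Ioc (0:ℝ) 1, HasDerivAt u (ud x) x)
    (hu1 : u 1 = 0)
    (hud2 : MeasureTheory.IntegrableOn (fun x => a x * (ud x) ^ 2) (Set.Ioo 0 1)) :
    ∫ x in Set.Ioo (0:ℝ) 1, (u x) ^ 2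
      ≤ (1 / (a 1 * (2 - μ))) * ∫ x in Set.Ioo (0:ℝ) 1, a x * (ud x) ^ 2 :=
  degenerate_poincare_fubini_general a ad μ hderiv hpos hμ2 hμ u ud huderiv hu1 hud2
end

section
/- The function a(x) = x^θ(1 + sin²(log(x^α))) for x ∈ (0,1], a(0)=0, with θ ∈ (0,2) and α ∈ (0, 1-θ/2), satisfies the degeneracy condition sup_{0<x≤1} x|a'(x)|/a(x) ≤ θ + 2α < 2, and moreover a(x) ≥ x^θ for all x ∈ [0,1]. -/
open MeasureTheory Set Real

theorem oscillating_weight_satisfies_degeneracy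
    (θ α : ℝ) (hθ : θ ∈ Set.Ioo (0:ℝ) 2) (hα : α ∈ Set.Ioo (0:ℝ) (1 - θ / 2))
    (a ad : ℝ → ℝ)
    (ha : ∀ x ∈ Set.Ioc (0:ℝ) 1, a x = x ^ θ * (1 + Real.sin (α * Real.log x) ^ 2))
    (ha0 : a 0 = 0)
    (had : ∀ x ∈ Set.Ioc (0:ℝ) 1,
      ad x = θ * x ^ (θ - 1) * (1 + Real.sin (α * Real.log x) ^ 2)
        + 2 * α * x ^ (θ - 1) * Real.sin (α * Real.log x) * Real.cos (α * Real.log x)) :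
    θ + 2 * α < 2 ∧
    (∀ x ∈ Set.Ioc (0:ℝ) 1, x * |ad x| ≤ (θ + 2 * α) * a x) ∧
    (∀ x ∈ Set.Icc (0:ℝ) 1, x ^ θ ≤ a x) := by
  obtain ⟨hθ0, hθ2⟩ := hθ
  obtain ⟨hα0, hα1⟩ := hα
  refine ⟨by linarith, ?_, ?_⟩
  · intro x hx
    obtain ⟨hx0, hx1⟩ := hx
    rw [had x ⟨hx0, hx1⟩, ha x ⟨hx0, hx1⟩]
    set s := Real.sin (α * Real.log x)
    set c := Real.cos (α * Real.log x)
    have hxθ : (0:ℝ) < x ^ θ := Real.rpow_pos_of_pos hx0 θ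
    have hxθ1 : (0:ℝ) < x ^ (θ - 1) := Real.rpow_pos_of_pos hx0 (θ - 1)
    have hpow : x * x ^ (θ - 1) = x ^ θ := by
      rw [← Real.rpow_one_add' (le_of_lt hx0) (by ring_nf; linarith)]
      ring_nf
    have hfact : θ * x ^ (θ - 1) * (1 + s ^ 2)
        + 2 * α * x ^ (θ - 1) * s * c = x ^ (θ - 1) * (θ * (1 + s ^ 2) + 2 * α * (s * c)) := by
      ring
    rw [hfact, abs_mul, abs_of_pos hxθ1, ← mul_assoc, hpow]
    have hs1 : |s| ≤ 1 := Real.abs_sin_le_one _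
    have hc1 : |c| ≤ 1 := Real.abs_cos_le_one _
    have hsc : |s * c| ≤ 1 := by
      rw [abs_mul]
      calc |s| * |c| ≤ 1 * 1 := mul_le_mul hs1 hc1 (abs_nonneg _) zero_le_one
      _ = 1 := one_mul 1
    have hs2 : (0:ℝ) ≤ s ^ 2 := sq_nonneg s
    have key : |θ * (1 + s ^ 2) + 2 * α * (s * c)| ≤ (θ + 2 * α) * (1 + s ^ 2) := by
      have h1 : |θ * (1 + s ^ 2) + 2 * α * (s * c)| ≤
          |θ * (1 + s ^ 2)| + |2 * α * (s * c)| := abs_add_le _ _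
      have h2 : |θ * (1 + s ^ 2)| = θ * (1 + s ^ 2) := abs_of_nonneg (by nlinarith)
      have h3 : |2 * α * (s * c)| = 2 * α * |s * c| := by
        rw [abs_mul, abs_of_nonneg (by linarith : (0:ℝ) ≤ 2 * α)]
      have h4 : 2 * α * |s * c| ≤ 2 * α * (1 + s ^ 2) := by nlinarith
      calc |θ * (1 + s ^ 2) + 2 * α * (s * c)| ≤ θ * (1 + s ^ 2) + 2 * α * |s * c| := by
            rw [h2, h3] at h1; exact h1
        _ ≤ θ * (1 + s ^ 2) + 2 * α * (1 + s ^ 2) := by linarith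
        _ = (θ + 2 * α) * (1 + s ^ 2) := by ring
    calc x ^ θ * |θ * (1 + s ^ 2) + 2 * α * (s * c)|
        ≤ x ^ θ * ((θ + 2 * α) * (1 + s ^ 2)) := by
          exact mul_le_mul_of_nonneg_left key (le_of_lt hxθ)
      _ = (θ + 2 * α) * (x ^ θ * (1 + s ^ 2)) := by ring
  · intro x hx
    obtain ⟨hx0, hx1⟩ := hx
    rcases eq_or_lt_of_le hx0 with h | h
    · rw [← h, ha0, Real.zero_rpow (ne_of_gt hθ0)]
    · rw [ha x ⟨h, hx1⟩]
      have hxθ : (0:ℝ) < x ^ θ := Real.rpow_pos_of_pos h θ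
      nlinarith [sq_nonneg (Real.sin (α * Real.log x))]
end

section
/- Vanishing weighted trace at the degeneracy point: if u ∈ L²(0,1) is locally absolutely continuous on (0,1] with ∫₀¹ x²|u'(x)|² dx < ∞, then lim_{x→0⁺} x·u(x)² = 0. -/
/-!
The function `v x = x * u x ^ 2` has derivative `u ^ 2 + 2 u (x u')`, which is integrable on
`(0, 1)` by Cauchy–Schwarz, so `v` has a limit `L` at `0⁺`. If `L ≠ 0`, then
`u x ^ 2 ≥ |L| / (2x)` near `0`, contradicting `u ∈ L²` since `1/x` is not integrable at `0`.
-/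

open MeasureTheory Set Filter Topology

theorem not_integrableOn_Ioo_zero_inv {c : ℝ} (hc : 0 < c) :
    ¬IntegrableOn (fun x : ℝ => x⁻¹) (Ioo 0 c) := by
  rw [← intervalIntegrable_iff_integrableOn_Ioo_of_le hc.le, intervalIntegrable_inv_iff]
  simp [hc.ne, hc.le]

theorem eq_zero_of_integrableOn_of_tendsto_smul {E : Type*} [NormedAddCommGroup E]
    [NormedSpace ℝ E] {g : ℝ → E} {c : ℝ} {L : E} (hc : 0 < c)
    (hg : IntegrableOn g (Ioo 0 c)) (hL : Tendsto (fun x => x • g x) (𝓝[>] 0) (𝓝 L)) :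
    L = 0 := by
  by_contra hL0
  have hpos : 0 < ‖L‖ := norm_pos_iff.mpr hL0
  have hnear : ∀ᶠ x in 𝓝[>] 0, ‖L‖ / 2 < ‖x • g x‖ :=
    hL.norm.eventually_const_lt (half_lt_self hpos)
  obtain ⟨δ, hδ, hδL⟩ := mem_nhdsGT_iff_exists_Ioo_subset.mp hnear
  have hε : 0 < min δ c := lt_min hδ hc
  refine not_integrableOn_Ioo_zero_inv hε ?_
  refine ((hg.mono_set (Ioo_subset_Ioo_right (min_le_right δ c))).norm.const_mul
    (2 / ‖L‖)).mono' measurable_inv.aestronglyMeasurable ?_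
  filter_upwards [ae_restrict_mem measurableSet_Ioo] with x ⟨hx0, hxε⟩
  have hx : ‖L‖ / 2 < x * ‖g x‖ := by
    simpa [norm_smul, abs_of_pos hx0] using hδL ⟨hx0, hxε.trans_le (min_le_left δ c)⟩
  rw [Real.norm_of_nonneg (inv_nonneg.mpr hx0.le), inv_le_iff_one_le_mul₀ hx0,
    div_mul_eq_mul_div, div_mul_eq_mul_div, le_div_iff₀ hpos]
  linarith

theorem tendsto_nhdsGT_of_hasDerivAt_of_integrableOn {E : Type*} [NormedAddCommGroup E]
    [NormedSpace ℝ E] [CompleteSpace E] {f f' : ℝ → E} {a b : ℝ} (hab : a < b)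
    (hderiv : ∀ x ∈ Ioc a b, HasDerivAt f (f' x) x) (hint : IntegrableOn f' (Ioo a b)) :
    Tendsto f (𝓝[>] a) (𝓝 (f b - ∫ x in a..b, f' x)) := by
  have hprim : Tendsto (fun x => ∫ t in x..b, f' t) (𝓝[>] a) (𝓝 (∫ t in a..b, f' t)) := by
    have hcont := intervalIntegral.continuousOn_primitive_interval_left (μ := volume)
      (a := a) (b := b) (f := f')
      (by rwa [uIcc_of_le hab.le, integrableOn_Icc_iff_integrableOn_Ioo])
    rw [uIcc_of_le hab.le] at hcont
    exact (hcont a (left_mem_Icc.mpr hab.le)).tendsto.mono_left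
      (nhdsWithin_le_of_mem (Icc_mem_nhdsGT hab))
  refine (tendsto_const_nhds.sub hprim).congr' ?_
  filter_upwards [Ioo_mem_nhdsGT hab] with x hx
  rw [intervalIntegral.integral_eq_sub_of_hasDerivAt, sub_sub_cancel]
  · intro y hy
    rw [uIcc_of_le hx.2.le] at hy
    exact hderiv y ⟨hx.1.trans_le hy.1, hy.2⟩
  · rw [intervalIntegrable_iff_integrableOn_Ioo_of_le hx.2.le]
    exact hint.mono_set (Ioo_subset_Ioo_left hx.1.le)

theorem weighted_trace_vanishes_at_zero
    (u ud : ℝ → ℝ)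
    (hu2 : MeasureTheory.IntegrableOn (fun x => (u x) ^ 2) (Set.Ioo 0 1))
    (huderiv : ∀ x ∈ Set.Ioc (0:ℝ) 1, HasDerivAt u (ud x) x)
    (hud2 : MeasureTheory.IntegrableOn (fun x => x ^ 2 * (ud x) ^ 2) (Set.Ioo 0 1)) :
    Filter.Tendsto (fun x => x * (u x) ^ 2) (nhdsWithin 0 (Set.Ioi 0)) (nhds 0) := by
  have hu : AEStronglyMeasurable u (volume.restrict (Ioo 0 1)) :=
    ContinuousOn.aestronglyMeasurable (fun x hx =>
      (huderiv x (Ioo_subset_Ioc_self hx)).continuousAt.continuousWithinAt) measurableSet_Ioo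
  have hud : AEStronglyMeasurable ud (volume.restrict (Ioo 0 1)) :=
    (aestronglyMeasurable_deriv u _).congr <| by
      filter_upwards [ae_restrict_mem measurableSet_Ioo] with x hx
      exact (huderiv x (Ioo_subset_Ioc_self hx)).deriv
  have hcross : IntegrableOn (fun x => u x * (x * ud x)) (Ioo 0 1) := by
    refine MemLp.integrable_mul (p := 2) (q := 2) ((memLp_two_iff_integrable_sq hu).mpr hu2) ?_
    refine (memLp_two_iff_integrable_sq (aestronglyMeasurable_id.mul hud)).mpr ?_
    show IntegrableOn (fun x => (x * ud x) ^ 2) (Ioo 0 1)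
    simpa only [mul_pow] using hud2
  have hderiv : ∀ x ∈ Ioc (0:ℝ) 1, HasDerivAt (fun x => x * u x ^ 2)
      (u x ^ 2 + 2 * (u x * (x * ud x))) x := fun x hx =>
    ((hasDerivAt_id' x).mul ((huderiv x hx).pow 2)).congr_deriv (by
      simp only [Pi.pow_apply, one_mul, Nat.cast_ofNat, Nat.add_one_sub_one, pow_one]
      ring)
  have hlim := tendsto_nhdsGT_of_hasDerivAt_of_integrableOn one_pos hderiv
    (hu2.add (hcross.const_mul 2))
  rwa [eq_zero_of_integrableOn_of_tendsto_smul one_pos hu2 hlim] at hlim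
end

section
/- Neumann condition is automatic in the strongly degenerate case: if μ ∈ [1,2), a ∈ C¹([0,1]) with a(0)=0, and u ∈ V²_a(0,1) (so a·u' ∈ H¹(0,1) and ∫₀¹ a|u'|² < ∞), then lim_{x→0⁺} a(x)·u'(x) = 0. -/
open MeasureTheory Set Filter

theorem flux_vanishes_strongly_degenerate
    (a ad : ℝ → ℝ) (μ : ℝ)
    (hderiv : ∀ x ∈ Set.Icc (0:ℝ) 1, HasDerivWithinAt a (ad x) (Set.Icc 0 1) x)
    (hadcont : ContinuousOn ad (Set.Icc 0 1))
    (hpos : ∀ x ∈ Set.Ioc (0:ℝ) 1, 0 < a x)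
    (ha0 : a 0 = 0)
    (hμ1 : 1 ≤ μ) (hμ2 : μ < 2)
    (hμ : ∀ x ∈ Set.Ioc (0:ℝ) 1, x * |ad x| ≤ μ * a x)
    (u ud w : ℝ → ℝ)
    (hu2 : MeasureTheory.IntegrableOn (fun x => (u x) ^ 2) (Set.Ioo 0 1))
    (huderiv : ∀ x ∈ Set.Ioc (0:ℝ) 1, HasDerivAt u (ud x) x)
    (hud2 : MeasureTheory.IntegrableOn (fun x => a x * (ud x) ^ 2) (Set.Ioo 0 1))
    (hau2 : MeasureTheory.IntegrableOn (fun x => (a x * ud x) ^ 2) (Set.Ioo 0 1))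
    (hwderiv : ∀ x ∈ Set.Ioc (0:ℝ) 1, HasDerivAt (fun y => a y * ud y) (w x) x)
    (hw2 : MeasureTheory.IntegrableOn (fun x => (w x) ^ 2) (Set.Ioo 0 1)) :
    Filter.Tendsto (fun x => a x * ud x) (nhdsWithin 0 (Set.Ioi 0)) (nhds 0) := by
  set f : ℝ → ℝ := fun y => a y * ud y with hf
  -- w is a.e. strongly measurable on Ioo 0 1
  have hwm : AEStronglyMeasurable w (volume.restrict (Ioo (0:ℝ) 1)) := by
    have hder : ∀ x ∈ Ioo (0:ℝ) 1, w x = deriv f x := fun x hx =>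
      ((hwderiv x ⟨hx.1, hx.2.le⟩).deriv).symm
    refine ((measurable_deriv f).aestronglyMeasurable.restrict).congr ?_
    refine (ae_restrict_iff' measurableSet_Ioo).mpr (ae_of_all _ fun x hx => (hder x hx).symm)
  -- w is integrable on Ioo 0 1
  have hw1 : IntegrableOn w (Ioo (0:ℝ) 1) := by
    have hbound : Integrable (fun x => 1 + (w x) ^ 2) (volume.restrict (Ioo (0:ℝ) 1)) := by
      refine (integrable_const 1).add hw2
    refine hbound.mono' hwm (ae_of_all _ fun x => ?_)
    rw [Real.norm_eq_abs]
    rcases le_or_gt (|w x|) 1 with h | h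
    · nlinarith [sq_nonneg (w x)]
    · nlinarith [sq_abs (w x)]
  -- interval integrability of w on [x, 1] for x in [0,1]
  have hwInt : ∀ x ∈ Icc (0:ℝ) 1, IntervalIntegrable w volume x 1 := by
    intro x hx
    rw [intervalIntegrable_iff_integrableOn_Ioc_of_le hx.2]
    refine IntegrableOn.congr_set_ae ?_ (Ioo_ae_eq_Ioc).symm
    exact hw1.mono_set (Ioo_subset_Ioo hx.1 le_rfl)
  -- FTC
  have hFTC : ∀ x ∈ Ioc (0:ℝ) 1, f x = f 1 - ∫ t in x..1, w t := by
    intro x hx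
    have h1 : (∫ t in x..1, w t) = f 1 - f x := by
      refine intervalIntegral.integral_eq_sub_of_hasDerivAt (fun t ht => ?_)
        (hwInt x ⟨hx.1.le, hx.2⟩)
      rw [uIcc_of_le hx.2] at ht
      exact hwderiv t ⟨lt_of_lt_of_le hx.1 ht.1, ht.2⟩
    linarith [h1]
  -- the primitive is continuous at 0 within Icc 0 1
  have hcont : Tendsto (fun x => ∫ t in x..1, w t) (nhdsWithin 0 (Ioi 0))
      (nhds (∫ t in (0:ℝ)..1, w t)) := by
    have h0 : ContinuousWithinAt (fun b => ∫ t in (1:ℝ)..b, w t) (Icc (0:ℝ) 1) 0 := by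
      refine intervalIntegral.continuousWithinAt_primitive (measure_singleton 0) ?_
      rw [show min (1:ℝ) 0 = 0 by simp, show max (1:ℝ) 1 = 1 by simp]
      exact hwInt 0 ⟨le_rfl, zero_le_one⟩
    have h1 : ContinuousWithinAt (fun b => ∫ t in b..1, w t) (Icc (0:ℝ) 1) 0 := by
      have := h0.neg
      refine this.congr (fun y _ => ?_) ?_ <;>
        simp [intervalIntegral.integral_symm 1]
    have h2 : Tendsto (fun b => ∫ t in b..1, w t) (nhdsWithin 0 (Icc (0:ℝ) 1))
        (nhds (∫ t in (0:ℝ)..1, w t)) := h1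
    refine h2.mono_left ?_
    rw [← nhdsWithin_Ioo_eq_nhdsGT (zero_lt_one)]
    exact nhdsWithin_mono _ Ioo_subset_Icc_self
  set L : ℝ := f 1 - ∫ t in (0:ℝ)..1, w t with hL
  have hfL : Tendsto f (nhdsWithin 0 (Ioi 0)) (nhds L) := by
    have : Tendsto (fun x => f 1 - ∫ t in x..1, w t) (nhdsWithin 0 (Ioi 0)) (nhds L) :=
      tendsto_const_nhds.sub hcont
    refine this.congr' ?_
    filter_upwards [Ioc_mem_nhdsGT_of_mem ⟨le_rfl, zero_lt_one⟩] with x hx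
    exact (hFTC x hx).symm
  -- It remains to show L = 0
  have hM : ∃ M : ℝ, 0 < M ∧ ∀ x ∈ Icc (0:ℝ) 1, a x ≤ M * x := by
    obtain ⟨M0, hM0⟩ := (isCompact_Icc).exists_bound_of_continuousOn hadcont
    refine ⟨max M0 1, lt_of_lt_of_le zero_lt_one (le_max_right _ _), fun x hx => ?_⟩
    have := (convex_Icc (0:ℝ) 1).norm_image_sub_le_of_norm_hasDerivWithin_le
      (fun y hy => hderiv y hy) (C := max M0 1)
      (fun y hy => le_trans (hM0 y hy) (le_max_left _ _)) (left_mem_Icc.mpr zero_le_one) hx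
    rw [ha0, sub_zero, sub_zero, Real.norm_eq_abs, Real.norm_eq_abs,
      abs_of_nonneg hx.1] at this
    exact le_trans (le_abs_self _) this
  obtain ⟨M, hMpos, hMa⟩ := hM
  have hL0 : L = 0 := by
    by_contra hLne
    have hhalf : 0 < |L| / 2 := by positivity
    have hev : ∀ᶠ x in nhdsWithin 0 (Ioi (0:ℝ)), |L| / 2 ≤ |f x| := by
      filter_upwards [hfL (Metric.ball_mem_nhds L hhalf)] with x hx
      have h1 : |f x - L| < |L| / 2 := by simpa [Real.dist_eq] using hx
      have h2 : |L| - |f x| ≤ |L - f x| := abs_sub_abs_le_abs_sub L (f x)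
      have h3 : |L - f x| = |f x - L| := abs_sub_comm L (f x)
      linarith
    obtain ⟨δ, hδpos, hδ⟩ : ∃ δ > 0, ∀ x ∈ Ioo (0:ℝ) δ, |L| / 2 ≤ |f x| := by
      rw [eventually_nhdsWithin_iff] at hev
      obtain ⟨ε, hεpos, hε⟩ := Metric.eventually_nhds_iff.mp hev
      exact ⟨ε, hεpos, fun x hx => hε (by simp [Real.dist_eq, abs_of_pos hx.1]; linarith [hx.2, hx.1]) hx.1⟩
    set δ' : ℝ := min δ 1 with hδ'
    have hδ'pos : 0 < δ' := lt_min hδpos zero_lt_one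
    have hδ'le : δ' ≤ 1 := min_le_right _ _
    -- c / x ≤ a x * ud x ^ 2 on Ioo 0 δ'
    set c : ℝ := |L| ^ 2 / (4 * M) with hc
    have hcpos : 0 < c := by
      have : 0 < |L| := abs_pos.mpr hLne
      positivity
    have hkey : ∀ x ∈ Ioo (0:ℝ) δ', c / x ≤ a x * (ud x) ^ 2 := by
      intro x hx
      have hx1 : x ∈ Ioc (0:ℝ) 1 := ⟨hx.1, le_trans hx.2.le hδ'le⟩
      have hax : 0 < a x := hpos x hx1
      have haxle : a x ≤ M * x := hMa x ⟨hx.1.le, hx1.2⟩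
      have hfx : |L| / 2 ≤ |f x| := hδ x ⟨hx.1, lt_of_lt_of_le hx.2 (min_le_left _ _)⟩
      have h1 : (|L| / 2) ^ 2 ≤ (f x) ^ 2 := by
        rw [← sq_abs (f x)]
        exact pow_le_pow_left₀ (by positivity) hfx 2
      have h2 : (f x) ^ 2 = a x * (a x * (ud x) ^ 2) := by rw [hf]; ring
      have h3 : (|L| / 2) ^ 2 ≤ a x * (a x * (ud x) ^ 2) := h2 ▸ h1
      have h4 : a x * (ud x) ^ 2 ≥ (|L| / 2) ^ 2 / a x := by
        rw [ge_iff_le, div_le_iff₀ hax]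
        nlinarith [h3]
      have h5 : (|L| / 2) ^ 2 / a x ≥ (|L| / 2) ^ 2 / (M * x) := by
        apply div_le_div_of_nonneg_left (by positivity) hax haxle
      have h6 : (|L| / 2) ^ 2 / (M * x) = c / x := by
        rw [hc]; field_simp; ring
      linarith
    -- integrability of c / x on Ioo 0 δ' : contradiction
    have hint : IntegrableOn (fun x => c / x) (Ioo (0:ℝ) δ') := by
      have hsub : IntegrableOn (fun x => a x * (ud x) ^ 2) (Ioo (0:ℝ) δ') :=
        hud2.mono_set (Ioo_subset_Ioo le_rfl hδ'le)
      refine hsub.mono' ?_ ?_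
      · exact (measurable_const.div measurable_id).aestronglyMeasurable.restrict
      · refine (ae_restrict_iff' measurableSet_Ioo).mpr (ae_of_all _ fun x hx => ?_)
        rw [Real.norm_eq_abs, abs_of_nonneg (div_nonneg hcpos.le hx.1.le)]
        exact hkey x hx
    have hinv : IntegrableOn (fun x => x ^ (-1 : ℝ)) (Ioo (0:ℝ) δ') := by
      have h5 : IntegrableOn (fun x => c⁻¹ * (c / x)) (Ioo (0:ℝ) δ') := hint.const_mul c⁻¹
      refine h5.congr_fun (fun x hx => ?_) measurableSet_Ioo
      rw [Real.rpow_neg_one]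
      field_simp
    rw [intervalIntegral.integrableOn_Ioo_rpow_iff hδ'pos] at hinv
    linarith
  rw [hL0] at hfL
  exact hfL
end

section
/- Integral inequality implies exponential decay: if E : [0,∞) → [0,∞) is non-increasing and there is M > 0 with ∫_t^∞ E(s) ds ≤ M·E(t) for all t ≥ 0, then E(t) ≤ E(0)·e^{1 − t/M} for all t ≥ M. -/
/-!
Let `F t = ∫_t^∞ E`. Since `E` is non-increasing, `F t - F (t + h) ≥ h E (t + h) ≥ (h / M) F (t + h)`,
that is `F (t + h) (1 + h / M) ≤ F t`. Iterating this `n` times with step `t / n` and letting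
`n → ∞` gives `F t e^{t/M} ≤ F 0 ≤ M E 0`, a discrete Gronwall argument that needs no
differentiability of `F`. Finally `M E t ≤ ∫_{t-M}^t E ≤ F (t - M)` by monotonicity again.
-/

open MeasureTheory Set Filter Topology

theorem mul_sub_le_intervalIntegral_of_antitoneOn {f : ℝ → ℝ} {a b : ℝ} (hab : a ≤ b)
    (hf : AntitoneOn f (Icc a b)) : f b * (b - a) ≤ ∫ s in a..b, f s := by
  calc f b * (b - a) = ∫ _ in a..b, f b := by simp [mul_comm]
    _ ≤ ∫ s in a..b, f s :=
      intervalIntegral.integral_mono_on hab intervalIntegrable_const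
        (AntitoneOn.intervalIntegrable (by rwa [uIcc_of_le hab]))
        fun s hs => hf hs (right_mem_Icc.2 hab) hs.2

theorem mul_sub_le_setIntegral_Ioi_of_antitoneOn {f : ℝ → ℝ} {a b : ℝ} (hab : a ≤ b)
    (hmono : AntitoneOn f (Icc a b)) (hint : IntegrableOn f (Ioi a))
    (hnonneg : ∀ s, b < s → 0 ≤ f s) : f b * (b - a) ≤ ∫ s in Ioi a, f s := by
  rw [← intervalIntegral.integral_interval_add_Ioi hint (hint.mono_set (Ioi_subset_Ioi hab))]
  have htail : 0 ≤ ∫ s in Ioi b, f s := setIntegral_nonneg measurableSet_Ioi hnonneg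
  linarith [mul_sub_le_intervalIntegral_of_antitoneOn hab hmono]

theorem mul_pow_le_of_forall_add_mul_le {g : ℝ → ℝ} {c h : ℝ} (hc : 0 ≤ c) (hh : 0 ≤ h)
    (hstep : ∀ t, 0 ≤ t → g (t + h) * (1 + c * h) ≤ g t) (n : ℕ) :
    g (n * h) * (1 + c * h) ^ n ≤ g 0 := by
  induction n with
  | zero => simp
  | succ n ih =>
    calc g ((n + 1 : ℕ) * h) * (1 + c * h) ^ (n + 1)
        = g (n * h + h) * (1 + c * h) * (1 + c * h) ^ n := by
          rw [Nat.cast_succ, add_one_mul, pow_succ]; ring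
      _ ≤ g (n * h) * (1 + c * h) ^ n := by gcongr; exact hstep _ (by positivity)
      _ ≤ g 0 := ih

theorem mul_exp_le_of_forall_add_mul_le {g : ℝ → ℝ} {c : ℝ} (hc : 0 ≤ c)
    (hstep : ∀ t h, 0 ≤ t → 0 ≤ h → g (t + h) * (1 + c * h) ≤ g t) {t : ℝ} (ht : 0 ≤ t) :
    g t * Real.exp (c * t) ≤ g 0 := by
  have hlim : Tendsto (fun n : ℕ => g t * (1 + c * t / n) ^ n) atTop
      (𝓝 (g t * Real.exp (c * t))) :=
    (Real.tendsto_one_add_div_pow_exp (c * t)).const_mul (g t)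
  refine le_of_tendsto hlim (eventually_atTop.2 ⟨1, fun n hn => ?_⟩)
  have hn : (n : ℝ) ≠ 0 := Nat.cast_ne_zero.2 (by omega)
  have := mul_pow_le_of_forall_add_mul_le hc (by positivity : 0 ≤ t / n)
    (fun s hs => hstep s _ hs (by positivity)) n
  rwa [mul_div_cancel₀ t hn, ← mul_div_assoc] at this

theorem setIntegral_Ioi_add_mul_le {E : ℝ → ℝ} {M t h : ℝ} (hM : 0 < M) (hh : 0 ≤ h)
    (hmono : AntitoneOn E (Icc t (t + h))) (hint : IntegrableOn E (Ioi t))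
    (hineq : ∫ s in Ioi (t + h), E s ≤ M * E (t + h)) :
    (∫ s in Ioi (t + h), E s) * (1 + M⁻¹ * h) ≤ ∫ s in Ioi t, E s := by
  have hab : t ≤ t + h := le_add_of_nonneg_right hh
  rw [← intervalIntegral.integral_interval_add_Ioi hint (hint.mono_set (Ioi_subset_Ioi hab))]
  have hlow := mul_sub_le_intervalIntegral_of_antitoneOn hab hmono
  have hineq' : M⁻¹ * ∫ s in Ioi (t + h), E s ≤ E (t + h) := by
    rwa [inv_mul_le_iff₀ hM]
  rw [add_sub_cancel_left] at hlow
  calc (∫ s in Ioi (t + h), E s) * (1 + M⁻¹ * h)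
      = (∫ s in Ioi (t + h), E s) + h * (M⁻¹ * ∫ s in Ioi (t + h), E s) := by ring
    _ ≤ (∫ s in Ioi (t + h), E s) + h * E (t + h) := by gcongr
    _ ≤ (∫ s in t..t + h, E s) + ∫ s in Ioi (t + h), E s := by linarith

theorem komornik_exponential_decay
    (E : ℝ → ℝ) (M : ℝ) (hM : 0 < M)
    (hnonneg : ∀ t, 0 ≤ t → 0 ≤ E t)
    (hmono : AntitoneOn E (Set.Ici 0))
    (hint : MeasureTheory.IntegrableOn E (Set.Ici 0))
    (hineq : ∀ t, 0 ≤ t → (∫ s in Set.Ioi t, E s) ≤ M * E t) :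
    ∀ t, M ≤ t → E t ≤ E 0 * Real.exp (1 - t / M) := by
  intro t ht
  have hmono_Icc : ∀ a b, 0 ≤ a → AntitoneOn E (Icc a b) :=
    fun a b ha => hmono.mono fun s hs => ha.trans hs.1
  have hint_Ioi : ∀ a, 0 ≤ a → IntegrableOn E (Ioi a) :=
    fun a ha => hint.mono_set fun s hs => ha.trans hs.le
  have htail_decay : (∫ s in Ioi (t - M), E s) * Real.exp (M⁻¹ * (t - M)) ≤ ∫ s in Ioi 0, E s :=
    mul_exp_le_of_forall_add_mul_le (g := fun a => ∫ s in Ioi a, E s) (inv_nonneg.2 hM.le)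
      (fun a h ha hh => setIntegral_Ioi_add_mul_le hM hh (hmono_Icc _ _ ha) (hint_Ioi a ha)
        (hineq _ (add_nonneg ha hh)))
      (sub_nonneg.2 ht)
  have htail_lower : E t * M ≤ ∫ s in Ioi (t - M), E s := by
    simpa using mul_sub_le_setIntegral_Ioi_of_antitoneOn (sub_le_self t hM.le)
      (hmono_Icc _ _ (sub_nonneg.2 ht)) (hint_Ioi _ (sub_nonneg.2 ht))
      (fun s hs => hnonneg s (hM.le.trans (ht.trans hs.le)))
  have hexp : Real.exp (1 - t / M) = (Real.exp (M⁻¹ * (t - M)))⁻¹ := by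
    rw [← Real.exp_neg]; field_simp; ring_nf
  rw [hexp, ← div_eq_mul_inv, le_div_iff₀ (Real.exp_pos _), ← mul_le_mul_iff_right₀ hM]
  calc M * (E t * Real.exp (M⁻¹ * (t - M)))
      = E t * M * Real.exp (M⁻¹ * (t - M)) := by ring
    _ ≤ (∫ s in Ioi (t - M), E s) * Real.exp (M⁻¹ * (t - M)) := by gcongr
    _ ≤ ∫ s in Ioi 0, E s := htail_decay
    _ ≤ M * E 0 := hineq 0 le_rfl
end

section
/- Convexity-weight function properties: let H(x) = √x·g(√x) on [0,r₀²] where g is odd, C¹, strictly increasing on [-1,1] with g(0)=0, and assume H is strictly convex on [0,r₀²]. Extend H by +∞ outside [0,r₀²] and set L(y) = Ĥ*(y)/y for y > 0, L(0) = 0, where Ĥ* is the convex conjugate. Then L is continuous, increasing, maps [0,∞) one-to-one onto [0,r₀²), and 0 < L(H'(r₀²)) < r₀². -/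
open Set Filter Topology

/-!
Write `L(y) = max_{0 ≤ x ≤ r₀²} (x - H(x)/y)`. Strict convexity with `H(0) = H'(0) = 0`
makes `H` positive and nondecreasing on `(0, r₀²]`, while `H(x) = o(x)` makes `Ĥ*(y) > 0`
for `y > 0`. Hence the maximiser is positive and `L` increases strictly, with `0 < L < r₀²`
on `(0, ∞)`. `Ĥ*` is `r₀²`-Lipschitz, giving continuity away from `0`; at `0`, monotonicity
of `H` forces the maximiser to be small when `y` is. Since `L(y) ≥ r₀² - H(r₀²)/y`, the
intermediate value theorem fills `[0, r₀²)`. Finally `H'(r₀²) ≥ H(r₀²)/r₀² > H'(0) = 0` by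
convexity.
-/

theorem ConvexOn.monotoneOn_of_isMinOn_left {f : ℝ → ℝ} {a b : ℝ}
    (hf : ConvexOn ℝ (Icc a b) f) (hmin : IsMinOn f (Icc a b) a) : MonotoneOn f (Icc a b) := by
  intro x hx y hy hxy
  rcases hx.1.eq_or_lt with rfl | hax
  · exact hmin hy
  · exact hf.le_right_of_left_le'' (left_mem_Icc.2 (hx.1.trans hx.2)) hy hax hxy (hmin hx)

theorem StrictConvexOn.lt_of_hasDerivWithinAt_zero {S : Set ℝ} {f : ℝ → ℝ} {x₀ x : ℝ}
    (hf : StrictConvexOn ℝ S f) (hx₀ : x₀ ∈ S) (hx : x ∈ S) (hlt : x₀ < x)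
    (hd : HasDerivWithinAt f 0 S x₀) : f x₀ < f x := by
  have := hf.lt_slope_of_hasDerivWithinAt hx₀ hx hlt hd
  rw [slope_def_field, div_pos_iff_of_pos_right (sub_pos.2 hlt)] at this
  linarith

/-- The convex conjugate of `H` extended by `+∞` off `s`. -/
noncomputable def conjugateOn (s : Set ℝ) (H : ℝ → ℝ) (y : ℝ) : ℝ :=
  sSup ((fun x => x * y - H x) '' s)

/-- `L(y) = Ĥ*(y) / y`, where Lean's `0 / 0 = 0` makes `L 0 = 0` hold automatically. -/
noncomputable def optimalWeight (a : ℝ) (H : ℝ → ℝ) (y : ℝ) : ℝ :=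
  conjugateOn (Icc 0 a) H y / y

section conjugateOn

variable {s : Set ℝ} {H : ℝ → ℝ} {x y : ℝ}

theorem le_conjugateOn (hs : IsCompact s) (hH : ContinuousOn H s) (hx : x ∈ s) :
    x * y - H x ≤ conjugateOn s H y :=
  le_csSup (hs.image_of_continuousOn ((continuousOn_id.mul continuousOn_const).sub hH)).bddAbove
    (mem_image_of_mem _ hx)

theorem conjugateOn_le {b : ℝ} (hne : s.Nonempty) (h : ∀ x ∈ s, x * y - H x ≤ b) :
    conjugateOn s H y ≤ b :=
  csSup_le (hne.image _) (forall_mem_image.2 h)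

theorem exists_conjugateOn_eq (hs : IsCompact s) (hne : s.Nonempty) (hH : ContinuousOn H s) :
    ∃ x ∈ s, conjugateOn s H y = x * y - H x := by
  obtain ⟨x, hx, hmax⟩ :=
    hs.exists_isMaxOn hne ((continuousOn_id.mul continuousOn_const).sub hH)
  exact ⟨x, hx, le_antisymm (conjugateOn_le hne hmax) (le_conjugateOn hs hH hx)⟩

theorem continuous_conjugateOn (hs : IsCompact s) (hne : s.Nonempty) (hH : ContinuousOn H s) :
    Continuous (conjugateOn s H) := by
  obtain ⟨R, hR⟩ := hs.isBounded.subset_closedBall 0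
  refine (LipschitzWith.of_le_add_mul' R fun y₁ y₂ => ?_).continuous
  obtain ⟨x, hx, hxy₁⟩ := exists_conjugateOn_eq (y := y₁) hs hne hH
  have hxR : |x| ≤ R := by simpa using hR hx
  have : x * (y₁ - y₂) ≤ R * dist y₁ y₂ := by
    rw [Real.dist_eq]
    exact (le_abs_self _).trans (abs_mul x _ ▸ mul_le_mul_of_nonneg_right hxR (abs_nonneg _))
  linarith [le_conjugateOn (y := y₂) hs hH hx]

end conjugateOn

section optimalWeight

variable {a : ℝ} {H : ℝ → ℝ} {y : ℝ}

@[simp]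
theorem optimalWeight_zero : optimalWeight a H 0 = 0 :=
  div_zero _

theorem exists_lt_mul_of_hasDerivWithinAt_zero (ha : 0 < a) (h0 : H 0 = 0)
    (hd : HasDerivWithinAt H 0 (Icc 0 a) 0) (hy : 0 < y) : ∃ x ∈ Ioc 0 a, H x < x * y := by
  have hslope : ∃ᶠ x in 𝓝[>] 0, slope H 0 x < y :=
    (hd.mono_of_mem_nhdsWithin (Icc_mem_nhdsGE ha)).liminf_right_slope_le hy
  obtain ⟨x, hxy, hx⟩ := (hslope.and_eventually (Ioc_mem_nhdsGT ha)).exists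
  rw [slope_def_field, h0, sub_zero, sub_zero, div_lt_iff₀ hx.1] at hxy
  exact ⟨x, hx, by linarith⟩

theorem conjugateOn_Icc_pos (ha : 0 < a) (hH : ContinuousOn H (Icc 0 a)) (h0 : H 0 = 0)
    (hd : HasDerivWithinAt H 0 (Icc 0 a) 0) (hy : 0 < y) : 0 < conjugateOn (Icc 0 a) H y := by
  obtain ⟨x, hx, hHx⟩ := exists_lt_mul_of_hasDerivWithinAt_zero ha h0 hd hy
  linarith [le_conjugateOn (y := y) isCompact_Icc hH (Ioc_subset_Icc_self hx)]

theorem conjugateOn_Icc_lt (ha : 0 < a) (hH : ContinuousOn H (Icc 0 a)) (h0 : H 0 = 0)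
    (hpos : ∀ x ∈ Ioc 0 a, 0 < H x) (hy : 0 < y) : conjugateOn (Icc 0 a) H y < a * y := by
  obtain ⟨x, ⟨hx0, hxa⟩, hx⟩ :=
    exists_conjugateOn_eq (y := y) isCompact_Icc ⟨0, le_rfl, ha.le⟩ hH
  rcases hx0.eq_or_lt with rfl | hx0
  · rw [hx, h0, zero_mul, sub_zero]; positivity
  · nlinarith [hpos x ⟨hx0, hxa⟩]

theorem optimalWeight_pos (ha : 0 < a) (hH : ContinuousOn H (Icc 0 a)) (h0 : H 0 = 0)
    (hd : HasDerivWithinAt H 0 (Icc 0 a) 0) (hy : 0 < y) : 0 < optimalWeight a H y :=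
  div_pos (conjugateOn_Icc_pos ha hH h0 hd hy) hy

theorem optimalWeight_lt (ha : 0 < a) (hH : ContinuousOn H (Icc 0 a)) (h0 : H 0 = 0)
    (hpos : ∀ x ∈ Ioc 0 a, 0 < H x) (hy : 0 < y) : optimalWeight a H y < a :=
  (div_lt_iff₀ hy).2 (conjugateOn_Icc_lt ha hH h0 hpos hy)

theorem sub_div_le_optimalWeight (ha : 0 ≤ a) (hH : ContinuousOn H (Icc 0 a)) (hy : 0 < y) :
    a - H a / y ≤ optimalWeight a H y := by
  rw [optimalWeight, le_div_iff₀ hy, sub_mul, div_mul_cancel₀ _ hy.ne']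
  exact le_conjugateOn isCompact_Icc hH (right_mem_Icc.2 ha)

theorem strictMonoOn_optimalWeight (ha : 0 < a) (hH : ContinuousOn H (Icc 0 a)) (h0 : H 0 = 0)
    (hpos : ∀ x ∈ Ioc 0 a, 0 < H x) (hd : HasDerivWithinAt H 0 (Icc 0 a) 0) :
    StrictMonoOn (optimalWeight a H) (Ici 0) := by
  intro y (hy : 0 ≤ y) z _ hyz
  have hz : 0 < z := hy.trans_lt hyz
  rcases hy.eq_or_lt with rfl | hy
  · simpa using optimalWeight_pos ha hH h0 hd hz
  obtain ⟨x, hx, hxy⟩ := exists_conjugateOn_eq (y := y) isCompact_Icc ⟨0, le_rfl, ha.le⟩ hH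
  have hx0 : 0 < x := by
    refine hx.1.lt_of_ne fun hx0 => ?_
    have := conjugateOn_Icc_pos ha hH h0 hd hy
    rw [hxy, ← hx0, h0] at this
    simp at this
  -- with the maximiser `x` for `y` fixed, `x - H x / y` increases strictly in `y`
  have hy_eq : optimalWeight a H y = x - H x / y := by
    rw [optimalWeight, hxy]; field_simp
  have hz_ge : x - H x / z ≤ optimalWeight a H z := by
    rw [optimalWeight, le_div_iff₀ hz, sub_mul, div_mul_cancel₀ _ hz.ne']
    exact le_conjugateOn isCompact_Icc hH hx
  have : H x / z < H x / y := div_lt_div_of_pos_left (hpos x ⟨hx0, hx.2⟩) hy hyz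
  linarith

theorem optimalWeight_le_of_mem_Ioc (ha : 0 < a) (h0 : H 0 = 0) (hmono : MonotoneOn H (Icc 0 a))
    (hpos : ∀ x ∈ Ioc 0 a, 0 < H x) {ε : ℝ} (hε : ε ∈ Ioc 0 a) :
    optimalWeight a H (H ε / a) ≤ ε := by
  have hε' : ε ∈ Icc 0 a := Ioc_subset_Icc_self hε
  have hy : 0 < H ε / a := div_pos (hpos ε hε) ha
  rw [optimalWeight, div_le_iff₀ hy]
  refine conjugateOn_le ⟨0, le_rfl, ha.le⟩ fun x hx => ?_
  rcases le_or_gt x ε with hxε | hεx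
  · have hHx : 0 ≤ H x := h0 ▸ hmono (left_mem_Icc.2 ha.le) hx hx.1
    nlinarith
  · have hHx : H ε ≤ H x := hmono hε' hx hεx.le
    have hay : a * (H ε / a) = H ε := mul_div_cancel₀ _ ha.ne'
    nlinarith [mul_le_mul_of_nonneg_right hx.2 hy.le, mul_pos hε.1 hy]

theorem continuousOn_optimalWeight (ha : 0 < a) (hH : ContinuousOn H (Icc 0 a)) (h0 : H 0 = 0)
    (hpos : ∀ x ∈ Ioc 0 a, 0 < H x) (hmono : MonotoneOn H (Icc 0 a))
    (hd : HasDerivWithinAt H 0 (Icc 0 a) 0) :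
    ContinuousOn (optimalWeight a H) (Ici 0) := by
  intro y (hy : 0 ≤ y)
  rcases hy.eq_or_lt with rfl | hy
  · refine (strictMonoOn_optimalWeight ha hH h0 hpos hd).continuousWithinAt_right_of_exists_between
      self_mem_nhdsWithin fun b hb => ?_
    rw [optimalWeight_zero] at hb ⊢
    have hε : min b a ∈ Ioc 0 a := ⟨lt_min hb ha, min_le_right _ _⟩
    have hy₀ : 0 < H (min b a) / a := div_pos (hpos _ hε) ha
    exact ⟨_, hy₀.le, optimalWeight_pos ha hH h0 hd hy₀,
      (optimalWeight_le_of_mem_Ioc ha h0 hmono hpos hε).trans (min_le_left _ _)⟩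
  · exact ((continuous_conjugateOn isCompact_Icc ⟨0, le_rfl, ha.le⟩ hH).continuousAt.div
      continuousAt_id hy.ne').continuousWithinAt

theorem image_optimalWeight_Ici (ha : 0 < a) (hH : ContinuousOn H (Icc 0 a)) (h0 : H 0 = 0)
    (hpos : ∀ x ∈ Ioc 0 a, 0 < H x) (hmono : MonotoneOn H (Icc 0 a))
    (hd : HasDerivWithinAt H 0 (Icc 0 a) 0) :
    optimalWeight a H '' Ici 0 = Ico 0 a := by
  refine Subset.antisymm ?_ fun c ⟨hc0, hca⟩ => ?_
  · rintro _ ⟨y, hy : 0 ≤ y, rfl⟩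
    rcases hy.eq_or_lt with rfl | hy
    · simpa using ha
    · exact ⟨(optimalWeight_pos ha hH h0 hd hy).le, optimalWeight_lt ha hH h0 hpos hy⟩
  have hlim : Tendsto (fun y => a - H a / y) atTop (𝓝 a) := by
    simpa using (tendsto_const_nhds (x := a)).sub
      ((tendsto_const_nhds (x := H a)).div_atTop tendsto_id)
  obtain ⟨Y, hcY, hY⟩ :=
    ((hlim.eventually (lt_mem_nhds hca)).and (eventually_gt_atTop 0)).exists
  obtain ⟨y, hy, rfl⟩ := intermediate_value_Icc hY.le
    ((continuousOn_optimalWeight ha hH h0 hpos hmono hd).mono Icc_subset_Ici_self)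
    ⟨by simpa using hc0, hcY.le.trans (sub_div_le_optimalWeight ha.le hH hY)⟩
  exact mem_image_of_mem _ hy.1

end optimalWeight

theorem optimal_weight_function_properties_general
    (r₀ : ℝ) (hr₀ : r₀ ∈ Set.Ioc (0:ℝ) 1)
    (g : ℝ → ℝ)
    (H H' : ℝ → ℝ)
    (hH : ∀ x ∈ Set.Icc (0:ℝ) (r₀ ^ 2), H x = Real.sqrt x * g (Real.sqrt x))
    (hconv : StrictConvexOn ℝ (Set.Icc 0 (r₀ ^ 2)) H)
    (hH'deriv : ∀ x ∈ Set.Icc (0:ℝ) (r₀ ^ 2),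
      HasDerivWithinAt H (H' x) (Set.Icc 0 (r₀ ^ 2)) x)
    (hH'0 : H' 0 = 0)
    (Hstar L : ℝ → ℝ)
    (hHstar : ∀ y, Hstar y = sSup ((fun x => x * y - H x) '' Set.Icc 0 (r₀ ^ 2)))
    (hL : ∀ y, 0 < y → L y = Hstar y / y)
    (hL0 : L 0 = 0) :
    ContinuousOn L (Set.Ici 0) ∧
    StrictMonoOn L (Set.Ici 0) ∧
    L '' Set.Ici 0 = Set.Ico 0 (r₀ ^ 2) ∧
    0 < L (H' (r₀ ^ 2)) ∧ L (H' (r₀ ^ 2)) < r₀ ^ 2 := by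
  have ha : 0 < r₀ ^ 2 := pow_pos hr₀.1 2
  have hmem0 : (0 : ℝ) ∈ Icc 0 (r₀ ^ 2) := left_mem_Icc.2 ha.le
  have hmema : r₀ ^ 2 ∈ Icc 0 (r₀ ^ 2) := right_mem_Icc.2 ha.le
  have h0 : H 0 = 0 := by simp [hH 0 hmem0]
  have hd : HasDerivWithinAt H 0 (Icc 0 (r₀ ^ 2)) 0 := by simpa [hH'0] using hH'deriv 0 hmem0
  have hcont : ContinuousOn H (Icc 0 (r₀ ^ 2)) := fun x hx => (hH'deriv x hx).continuousWithinAt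
  have hpos : ∀ x ∈ Ioc 0 (r₀ ^ 2), 0 < H x := fun x hx =>
    h0 ▸ hconv.lt_of_hasDerivWithinAt_zero hmem0 (Ioc_subset_Icc_self hx) hx.1 hd
  have hmin : IsMinOn H (Icc 0 (r₀ ^ 2)) 0 := fun x hx =>
    hx.1.eq_or_lt.elim (fun hx0 => hx0 ▸ le_rfl (a := H 0))
      fun hx0 => (hconv.lt_of_hasDerivWithinAt_zero hmem0 hx hx0 hd).le
  have hmono := hconv.convexOn.monotoneOn_of_isMinOn_left hmin
  have hH'a : 0 < H' (r₀ ^ 2) := (hconv.lt_slope_of_hasDerivWithinAt hmem0 hmema ha hd).trans_le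
    (hconv.convexOn.slope_le_of_hasDerivWithinAt hmem0 hmema ha (hH'deriv _ hmema))
  have hLeq : EqOn L (optimalWeight (r₀ ^ 2) H) (Ici 0) := by
    intro y (hy : 0 ≤ y)
    rcases hy.eq_or_lt with rfl | hy
    · rw [hL0, optimalWeight_zero]
    · rw [hL y hy, hHstar, optimalWeight, conjugateOn]
  refine ⟨(continuousOn_optimalWeight ha hcont h0 hpos hmono hd).congr hLeq,
    (strictMonoOn_optimalWeight ha hcont h0 hpos hd).congr hLeq.symm,
    hLeq.image_eq.trans (image_optimalWeight_Ici ha hcont h0 hpos hmono hd), ?_⟩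
  rw [hLeq (mem_Ici.2 hH'a.le)]
  exact ⟨optimalWeight_pos ha hcont h0 hd hH'a, optimalWeight_lt ha hcont h0 hpos hH'a⟩

theorem optimal_weight_function_properties
    (r₀ : ℝ) (hr₀ : r₀ ∈ Set.Ioc (0:ℝ) 1)
    (g : ℝ → ℝ)
    (hodd : ∀ x ∈ Set.Icc (-1:ℝ) 1, g (-x) = -g x)
    (hg0 : g 0 = 0)
    (hgC1 : ContDiffOn ℝ 1 g (Set.Icc (-1) 1))
    (hgmono : StrictMonoOn g (Set.Icc (-1) 1))
    (H H' : ℝ → ℝ)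
    (hH : ∀ x ∈ Set.Icc (0:ℝ) (r₀ ^ 2), H x = Real.sqrt x * g (Real.sqrt x))
    (hconv : StrictConvexOn ℝ (Set.Icc 0 (r₀ ^ 2)) H)
    (hH'deriv : ∀ x ∈ Set.Icc (0:ℝ) (r₀ ^ 2),
      HasDerivWithinAt H (H' x) (Set.Icc 0 (r₀ ^ 2)) x)
    (hH'0 : H' 0 = 0)
    (Hstar L : ℝ → ℝ)
    (hHstar : ∀ y, Hstar y = sSup ((fun x => x * y - H x) '' Set.Icc 0 (r₀ ^ 2)))
    (hL : ∀ y, 0 < y → L y = Hstar y / y)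
    (hL0 : L 0 = 0) :
    ContinuousOn L (Set.Ici 0) ∧
    StrictMonoOn L (Set.Ici 0) ∧
    L '' Set.Ici 0 = Set.Ico 0 (r₀ ^ 2) ∧
    0 < L (H' (r₀ ^ 2)) ∧ L (H' (r₀ ^ 2)) < r₀ ^ 2 :=
  optimal_weight_function_properties_general r₀ hr₀ g H H' hH hconv hH'deriv hH'0 Hstar L hHstar hL
    hL0
end
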